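/- The polynomial P(z₁, z₂) = (1/2880)·[720(z₁² − 2)² + z₂⁴((z₂² + 8z₁)² + 56z₁² + 240)] vanishes at a real point (z₁, z₂) if and only if (z₁, z₂) = (√2, 0) or (z₁, z₂) = (−√2, 0). -/

import Mathlib

theorem Real.sq_eq_two_iff {x : ℝ} : x ^ 2 = 2 ↔ x = √2 ∨ x = -√2 := by
  rw [← sq_eq_sq_iff_eq_or_eq_neg, Real.sq_sqrt zero_le_two]

theorem mul_sq_add_pow_four_mul_eq_zero_iff {k a b c : ℝ} (hk : 0 < k) (hc : 0 < c) :
    k * a ^ 2 + b ^ 4 * c = 0 ↔ a = 0 ∧ b = 0 := by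
  rw [add_eq_zero_iff_of_nonneg (by positivity) (by positivity)]
  simp [hk.ne', hc.ne']

/-- The polynomial `P(z₁, z₂) = (1/2880)·[720(z₁² − 2)² + z₂⁴((z₂² + 8z₁)² + 56z₁² + 240)]`
vanishes at a real point `(z₁, z₂)` iff `(z₁, z₂) = (±√2, 0)`. -/
theorem degenerate_root_set (z₁ z₂ : ℝ) :
    (1 / 2880) * (720 * (z₁ ^ 2 - 2) ^ 2
        + z₂ ^ 4 * ((z₂ ^ 2 + 8 * z₁) ^ 2 + 56 * z₁ ^ 2 + 240)) = 0
      ↔ (z₁ = Real.sqrt 2 ∧ z₂ = 0) ∨ (z₁ = -Real.sqrt 2 ∧ z₂ = 0) := by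
  have hc : 0 < (z₂ ^ 2 + 8 * z₁) ^ 2 + 56 * z₁ ^ 2 + 240 := by positivity
  rw [mul_eq_zero, or_iff_right (by norm_num), mul_sq_add_pow_four_mul_eq_zero_iff (by norm_num) hc,
    sub_eq_zero, Real.sq_eq_two_iff, or_and_right]
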